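/- Let ħ > 0, let ψ : ℝ² → ℂ² be continuously differentiable, and define n_s(r) := (1/2)·ψ(r)*σ_s ψ(r) and J_s^k(r) := (ħ/2)·Im( ψ(r)*σ_s ∂^k ψ(r) ). Then at every point r where ψ(r) ≠ 0 (so n₀(r) > 0), for every s = 1,2,3 and k = 1,2, the pure-state closure relation holds: J_s^k(r) = (n_s(r)/n₀(r))·J₀^k(r) − (ħ/2)·Σ_{i,j=1}^{3} η_{sij}·n_i(r)·∂^k( n_j/n₀ )(r). -/

import Mathlib

/-!
At a point `r` put `a = ψ r` and `b = ∂ₖψ r`. Because the Pauli matrices are Hermitian,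
`∂ₖ n_μ = Re (a* σ_μ b)` while `J_μ^k = (ħ/2) Im (a* σ_μ b)`, and for the rank-one state `a a*`
these satisfy the polynomial identity `n₀ J_s − n_s J₀ = −(ħ/2) (n × ∂ₖn)_s`.
By the quotient rule `∂ₖ(n/n₀) = ∂ₖn / n₀ − (∂ₖn₀ / n₀²) n`, and the second term drops out of
`n × ∂ₖ(n/n₀)` since `n × n = 0`.
-/

open Matrix

/-- The Pauli matrices `σ₀, σ₁, σ₂, σ₃` as 2×2 complex matrices. -/
noncomputable def pauli : Fin 4 → Matrix (Fin 2) (Fin 2) ℂ :=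
  ![!![1, 0; 0, 1], !![0, 1; 1, 0], !![0, -Complex.I; Complex.I, 0], !![1, 0; 0, -1]]

/-- The Levi-Civita symbol on three indices (indexed by `Fin 3`):
totally antisymmetric with `leviCivita 0 1 2 = 1`. -/
def leviCivita (i j k : Fin 3) : ℤ :=
  ((j : ℤ) - (i : ℤ)) * ((k : ℤ) - (j : ℤ)) * ((k : ℤ) - (i : ℤ)) / 2

/-- The spinorial densities `n_s(r) := (1/2)·ψ(r)*σ_s ψ(r)` of a pure state. -/
noncomputable def spinDensity (ψ : EuclideanSpace ℝ (Fin 2) → Fin 2 → ℂ) (s : Fin 4)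
    (r : EuclideanSpace ℝ (Fin 2)) : ℝ :=
  ((1 / 2 : ℂ) * (star (ψ r) ⬝ᵥ (pauli s).mulVec (ψ r))).re

/-- The spinorial currents `J_s^k(r) := (ħ/2)·Im(ψ(r)*σ_s ∂^k ψ(r))` of a pure state. -/
noncomputable def spinCurrent (hbar : ℝ) (ψ : EuclideanSpace ℝ (Fin 2) → Fin 2 → ℂ)
    (s : Fin 4) (k : Fin 2) (r : EuclideanSpace ℝ (Fin 2)) : ℝ :=
  (hbar / 2) * (star (ψ r) ⬝ᵥ (pauli s).mulVec
      (fun i => fderiv ℝ (fun y => ψ y i) r (EuclideanSpace.single k 1))).im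

theorem fderiv_div_apply {𝕜 F : Type*} [NontriviallyNormedField 𝕜] [NormedAddCommGroup F]
    [NormedSpace 𝕜 F] {c d : F → 𝕜} {x : F} (hc : DifferentiableAt 𝕜 c x)
    (hd : DifferentiableAt 𝕜 d x) (hx : d x ≠ 0) (v : F) :
    fderiv 𝕜 (fun y => c y / d y) x v
      = (fderiv 𝕜 c x v * d x - c x * fderiv 𝕜 d x v) / d x ^ 2 := by
  have h := hc.hasFDerivAt.fun_mul ((hasFDerivAt_inv hx).comp x hd.hasFDerivAt)
  simp only [Function.comp_def, ← div_eq_mul_inv] at h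
  simp only [h.fderiv, _root_.add_apply, _root_.smul_apply, ContinuousLinearMap.comp_apply,
    ContinuousLinearMap.toSpanSingleton_apply, smul_eq_mul]
  field_simp
  ring

section Calculus

variable {E : Type*} [NormedAddCommGroup E] [NormedSpace ℝ E] {x : E}

theorem HasFDerivAt.star_dotProduct {n 𝔸 : Type*} [Fintype n] [NormedCommRing 𝔸]
    [NormedAlgebra ℝ 𝔸] [StarRing 𝔸] [StarModule ℝ 𝔸] [ContinuousStar 𝔸]
    {a b : E → n → 𝔸} {a' b' : E →L[ℝ] n → 𝔸}
    (ha : HasFDerivAt a a' x) (hb : HasFDerivAt b b' x) :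
    HasFDerivAt (fun y => star (a y) ⬝ᵥ b y)
      (∑ i, (star (a x i) • (ContinuousLinearMap.proj i ∘L b')
        + b x i • ((starL' ℝ : 𝔸 ≃L[ℝ] 𝔸) : 𝔸 →L[ℝ] 𝔸) ∘L ContinuousLinearMap.proj i ∘L a')) x := by
  simp only [dotProduct, Pi.star_apply]
  exact .fun_sum fun i _ => (hasFDerivAt_pi'.1 ha i).star.mul (hasFDerivAt_pi'.1 hb i)

variable {n : Type*} [Fintype n] {M : Matrix n n ℂ} {ψ : E → n → ℂ}

theorem Matrix.IsHermitian.star_dotProduct_mulVec_swap (hM : M.IsHermitian) (u w : n → ℂ) :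
    star u ⬝ᵥ M *ᵥ w = star (star w ⬝ᵥ M *ᵥ u) := by
  rw [star_dotProduct, star_mulVec, ← dotProduct_mulVec, hM.eq]

theorem DifferentiableAt.re_star_dotProduct_mulVec (M : Matrix n n ℂ)
    (hψ : DifferentiableAt ℝ ψ x) :
    DifferentiableAt ℝ (fun y => (star (ψ y) ⬝ᵥ M *ᵥ ψ y).re) x := by
  simp only [dotProduct, mulVec, Pi.star_apply]
  fun_prop

theorem fderiv_re_star_dotProduct_mulVec_apply (hM : M.IsHermitian)
    (hψ : DifferentiableAt ℝ ψ x) (v : E) :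
    fderiv ℝ (fun y => (star (ψ y) ⬝ᵥ M *ᵥ ψ y).re) x v
      = 2 * (star (ψ x) ⬝ᵥ M *ᵥ fderiv ℝ ψ x v).re := by
  let L : (n → ℂ) →L[ℝ] n → ℂ := (M.mulVecLin.restrictScalars ℝ).toContinuousLinearMap
  have h : HasFDerivAt (fun y => (star (ψ y) ⬝ᵥ M *ᵥ ψ y).re) _ x :=
    Complex.reCLM.hasFDerivAt.comp x
      (hψ.hasFDerivAt.star_dotProduct (L.hasFDerivAt.comp x hψ.hasFDerivAt))
  have hsum : ∑ i, (star (ψ x i) * (M *ᵥ fderiv ℝ ψ x v) i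
        + (M *ᵥ ψ x) i * star (fderiv ℝ ψ x v i))
      = star (ψ x) ⬝ᵥ M *ᵥ fderiv ℝ ψ x v + star (fderiv ℝ ψ x v) ⬝ᵥ M *ᵥ ψ x := by
    simp [dotProduct, Finset.sum_add_distrib, mul_comm]
  simp only [h.fderiv, L, LinearMap.coe_toContinuousLinearMap', LinearMap.coe_restrictScalars,
    mulVecLin_apply, ContinuousLinearMap.comp_apply, _root_.sum_apply,
    _root_.add_apply, _root_.smul_apply, ContinuousLinearMap.proj_apply, smul_eq_mul,
    ContinuousLinearEquiv.coe_coe, starL'_apply, Complex.reCLM_apply, hsum]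
  rw [hM.star_dotProduct_mulVec_swap (fderiv ℝ ψ x v), Complex.star_def, Complex.add_re,
    Complex.conj_re]
  ring

end Calculus

section Algebra

theorem sum_leviCivita_mul_mul_eq_cross {R : Type*} [CommRing R] (u w : Fin 3 → R) (s : Fin 3) :
    ∑ i, ∑ j, (leviCivita s i j : R) * u i * w j = (u ⨯₃ w) s := by
  fin_cases s <;> simp [Fin.sum_univ_three, leviCivita, cross_apply] <;> ring

theorem pauli_zero : pauli 0 = 1 := by
  ext i j
  fin_cases i <;> fin_cases j <;> simp [pauli]

theorem pauli_isHermitian (s : Fin 4) : (pauli s).IsHermitian := by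
  fin_cases s <;> ext i j <;> fin_cases i <;> fin_cases j <;> simp [pauli]

theorem star_dotProduct_pauli_closure (a b : Fin 2 → ℂ) (s : Fin 3) :
    (star a ⬝ᵥ pauli 0 *ᵥ a).re * (star a ⬝ᵥ pauli s.succ *ᵥ b).im
      - (star a ⬝ᵥ pauli s.succ *ᵥ a).re * (star a ⬝ᵥ pauli 0 *ᵥ b).im
    = -((fun i : Fin 3 => (star a ⬝ᵥ pauli i.succ *ᵥ a).re) ⨯₃
        (fun i : Fin 3 => (star a ⬝ᵥ pauli i.succ *ᵥ b).re)) s := by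
  fin_cases s <;>
    simp [pauli, cross_apply, dotProduct, mulVec, Fin.sum_univ_two, Complex.mul_re,
      Complex.mul_im] <;>
    ring

end Algebra

section SpinDensities

variable {ψ : EuclideanSpace ℝ (Fin 2) → Fin 2 → ℂ} {r : EuclideanSpace ℝ (Fin 2)}

theorem spinDensity_eq (s : Fin 4) :
    spinDensity ψ s = fun r => 2⁻¹ * (star (ψ r) ⬝ᵥ pauli s *ᵥ ψ r).re := by
  ext r
  simp [spinDensity]

open scoped ComplexOrder in
theorem spinDensity_zero_pos (hr : ψ r ≠ 0) : 0 < spinDensity ψ 0 r := by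
  have h := (Complex.pos_iff.1 (dotProduct_star_self_pos_iff.2 hr)).1
  simp only [spinDensity_eq, pauli_zero, one_mulVec]
  positivity

theorem differentiableAt_spinDensity (hψ : DifferentiableAt ℝ ψ r) (s : Fin 4) :
    DifferentiableAt ℝ (spinDensity ψ s) r := by
  rw [spinDensity_eq]
  exact (hψ.re_star_dotProduct_mulVec _).const_mul _

theorem fderiv_spinDensity_apply (hψ : DifferentiableAt ℝ ψ r) (s : Fin 4)
    (v : EuclideanSpace ℝ (Fin 2)) :
    fderiv ℝ (spinDensity ψ s) r v = (star (ψ r) ⬝ᵥ pauli s *ᵥ fderiv ℝ ψ r v).re := by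
  rw [spinDensity_eq, fderiv_const_mul (hψ.re_star_dotProduct_mulVec _), _root_.smul_apply,
    fderiv_re_star_dotProduct_mulVec_apply (pauli_isHermitian s) hψ, smul_eq_mul,
    inv_mul_cancel_left₀ two_ne_zero]

theorem spinCurrent_eq (hψ : DifferentiableAt ℝ ψ r) (hbar : ℝ) (s : Fin 4) (k : Fin 2) :
    spinCurrent hbar ψ s k r
      = hbar / 2 * (star (ψ r) ⬝ᵥ pauli s *ᵥ fderiv ℝ ψ r (EuclideanSpace.single k 1)).im := by
  simp only [spinCurrent, fderiv_apply hψ]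
  rfl

theorem spinDensity_mul_spinCurrent_sub (hψ : DifferentiableAt ℝ ψ r) (hbar : ℝ) (s : Fin 3)
    (k : Fin 2) :
    spinDensity ψ 0 r * spinCurrent hbar ψ s.succ k r
        - spinDensity ψ s.succ r * spinCurrent hbar ψ 0 k r
      = -(hbar / 2) * ((fun i : Fin 3 => spinDensity ψ i.succ r) ⨯₃
          (fun j : Fin 3 => fderiv ℝ (spinDensity ψ j.succ) r (EuclideanSpace.single k 1))) s := by
  have h := star_dotProduct_pauli_closure (ψ r) (fderiv ℝ ψ r (EuclideanSpace.single k 1)) s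
  have hhalf : (fun i : Fin 3 => spinDensity ψ i.succ r)
      = (2⁻¹ : ℝ) • fun i : Fin 3 => (star (ψ r) ⬝ᵥ pauli i.succ *ᵥ ψ r).re := by
    ext i
    simp [spinDensity_eq]
  simp only [hhalf, fderiv_spinDensity_apply hψ, spinCurrent_eq hψ, LinearMap.map_smul₂,
    Pi.smul_apply, smul_eq_mul]
  simp only [spinDensity_eq]
  linear_combination (hbar / 4) * h

end SpinDensities

theorem pure_state_closure_relation_general (hbar : ℝ)
    (ψ : EuclideanSpace ℝ (Fin 2) → Fin 2 → ℂ) (hψ : ContDiff ℝ 1 ψ) :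
    ∀ r : EuclideanSpace ℝ (Fin 2), ψ r ≠ 0 →
      ∀ (s : Fin 3) (k : Fin 2),
        spinCurrent hbar ψ s.succ k r
          = (spinDensity ψ s.succ r / spinDensity ψ 0 r) * spinCurrent hbar ψ 0 k r
            - (hbar / 2) * ∑ i : Fin 3, ∑ j : Fin 3,
                (leviCivita s i j : ℝ) * spinDensity ψ i.succ r *
                  fderiv ℝ (fun y => spinDensity ψ j.succ y / spinDensity ψ 0 y) r
                    (EuclideanSpace.single k 1) := by
  intro r hr s k
  have hψr : DifferentiableAt ℝ ψ r := hψ.differentiable one_ne_zero r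
  have hn₀ : spinDensity ψ 0 r ≠ 0 := (spinDensity_zero_pos hr).ne'
  have hquot : (fun j : Fin 3 => fderiv ℝ (fun y => spinDensity ψ j.succ y / spinDensity ψ 0 y) r
        (EuclideanSpace.single k 1))
      = (spinDensity ψ 0 r)⁻¹ •
          (fun j : Fin 3 => fderiv ℝ (spinDensity ψ j.succ) r (EuclideanSpace.single k 1))
        - (fderiv ℝ (spinDensity ψ 0) r (EuclideanSpace.single k 1) / spinDensity ψ 0 r ^ 2) •
          (fun i : Fin 3 => spinDensity ψ i.succ r) := by
    ext j
    rw [fderiv_div_apply (differentiableAt_spinDensity hψr _) (differentiableAt_spinDensity hψr _)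
      hn₀]
    simp only [Pi.sub_apply, Pi.smul_apply, smul_eq_mul]
    field_simp
  rw [sum_leviCivita_mul_mul_eq_cross, hquot, map_sub, map_smul, map_smul, cross_self, smul_zero,
    sub_zero, Pi.smul_apply, smul_eq_mul]
  field_simp
  linear_combination 2 * spinDensity_mul_spinCurrent_sub hψr hbar s k

/-- For a continuously differentiable pure state `ψ : ℝ² → ℂ²`, at every point where
`ψ(r) ≠ 0` (so `n₀(r) > 0`), for every `s = 1,2,3` and `k = 1,2`, the pure-state closure
relation holds:
`J_s^k(r) = (n_s(r)/n₀(r))·J₀^k(r) − (ħ/2)·Σ_{i,j=1}^{3} η_{sij}·n_i(r)·∂^k(n_j/n₀)(r)`. -/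
theorem pure_state_closure_relation (hbar : ℝ) (hbar_pos : 0 < hbar)
    (ψ : EuclideanSpace ℝ (Fin 2) → Fin 2 → ℂ) (hψ : ContDiff ℝ 1 ψ) :
    ∀ r : EuclideanSpace ℝ (Fin 2), ψ r ≠ 0 →
      ∀ (s : Fin 3) (k : Fin 2),
        spinCurrent hbar ψ s.succ k r
          = (spinDensity ψ s.succ r / spinDensity ψ 0 r) * spinCurrent hbar ψ 0 k r
            - (hbar / 2) * ∑ i : Fin 3, ∑ j : Fin 3,
                (leviCivita s i j : ℝ) * spinDensity ψ i.succ r *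
                  fderiv ℝ (fun y => spinDensity ψ j.succ y / spinDensity ψ 0 y) r
                    (EuclideanSpace.single k 1) :=
  pure_state_closure_relation_general hbar ψ hψ
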